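/- Gronwall-type inequality with square-root nonlinearity: Let ζ be nonnegative and continuously differentiable on [t₀, t₁), let f be nonnegative and continuous on [t₀, t₁), and let u be nonnegative and continuous on [t₀, t₁) satisfying u(t) ≤ ζ(t) + ∫_{t₀}^{t} f(s) √(u(s)) ds for all t in [t₀, t₁). Then for all t in [t₀, t₁), u(t) ≤ ( √( ζ(t₀) + ∫_{t₀}^{t} |ζ'(s)| ds ) + (1/2) ∫_{t₀}^{t} f(s) ds )². -/

import Mathlib

/-!
Bound `ζ` on `[t₀, T]` by the constant `c = ζ t₀ + ∫_{t₀}^T |ζ'|`, which reduces the claim at `T`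
to the case of a constant `ζ`. For constant `c > 0`, the right-hand side
`w = c + ∫ f √u` satisfies `w' = f √u ≤ f √w`, so `(√w)' ≤ f / 2` and
`√u ≤ √w ≤ √c + ½ ∫ f`. The case `c = 0` follows by replacing `c` with `c + δ²`.
-/

open Set intervalIntegral

theorem hasDerivAt_integral_of_continuousOn_Icc {g : ℝ → ℝ} {a b t : ℝ}
    (hg : ContinuousOn g (Icc a b)) (ht : t ∈ Ioo a b) :
    HasDerivAt (fun x => ∫ s in a..x, g s) (g t) t := by
  have hsub : uIcc a t ⊆ Icc a b := by
    rw [uIcc_of_le ht.1.le]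
    exact Icc_subset_Icc le_rfl ht.2.le
  exact integral_hasDerivAt_right (hg.mono hsub).intervalIntegrable
    ((hg.mono Ioo_subset_Icc_self).stronglyMeasurableAtFilter isOpen_Ioo t ht)
    (hg.continuousAt (Icc_mem_nhds ht.1 ht.2))

theorem continuousOn_integral_of_continuousOn_Icc {g : ℝ → ℝ} {a b : ℝ} (hab : a ≤ b)
    (hg : ContinuousOn g (Icc a b)) :
    ContinuousOn (fun x => ∫ s in a..x, g s) (Icc a b) := by
  have h := continuousOn_primitive_interval (μ := MeasureTheory.volume)
    (by rw [uIcc_of_le hab]; exact hg.integrableOn_Icc)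
  rwa [uIcc_of_le hab] at h

theorem le_add_integral_abs_deriv {ζ ζ' : ℝ → ℝ} {a b t : ℝ}
    (hζ : ∀ x ∈ Icc a b, HasDerivAt ζ (ζ' x) x) (hζ' : ContinuousOn ζ' (Icc a b))
    (ht : t ∈ Icc a b) : ζ t ≤ ζ a + ∫ s in a..b, |ζ' s| := by
  have hsub : uIcc a t ⊆ Icc a b := by
    rw [uIcc_of_le ht.1]
    exact Icc_subset_Icc le_rfl ht.2
  have hint : IntervalIntegrable ζ' MeasureTheory.volume a t :=
    (hζ'.mono hsub).intervalIntegrable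
  have hftc : ∫ s in a..t, ζ' s = ζ t - ζ a :=
    integral_eq_sub_of_hasDerivAt (fun s hs => hζ s (hsub hs)) hint
  have habs : ∫ s in a..t, ζ' s ≤ ∫ s in a..t, |ζ' s| :=
    integral_mono_on ht.1 hint hint.abs fun s _ => le_abs_self _
  have hext : ∫ s in a..t, |ζ' s| ≤ ∫ s in a..b, |ζ' s| :=
    integral_mono_interval le_rfl ht.1 ht.2
      (Filter.Eventually.of_forall fun _ => abs_nonneg _)
      (hζ'.abs.mono (uIcc_of_le (ht.1.trans ht.2)).subset).intervalIntegrable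
  linarith

section SqrtGronwall

variable {a b c : ℝ} {f v : ℝ → ℝ}

theorem sqrt_le_of_le_add_integral_mul_sqrt_of_pos (hab : a ≤ b) (hc : 0 < c)
    (hf : ContinuousOn f (Icc a b)) (hf_nonneg : ∀ t ∈ Icc a b, 0 ≤ f t)
    (hv : ContinuousOn v (Icc a b))
    (hle : ∀ t ∈ Icc a b, v t ≤ c + ∫ s in a..t, f s * √(v s)) :
    √(v b) ≤ √c + (1 / 2) * ∫ s in a..b, f s := by
  set w : ℝ → ℝ := fun t => c + ∫ s in a..t, f s * √(v s)
  have hfv : ContinuousOn (fun s => f s * √(v s)) (Icc a b) := hf.mul hv.sqrt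
  have hw_pos : ∀ t ∈ Icc a b, 0 < w t := fun t ht =>
    add_pos_of_pos_of_nonneg hc <| integral_nonneg ht.1 fun s hs =>
      mul_nonneg (hf_nonneg s ⟨hs.1, hs.2.trans ht.2⟩) (Real.sqrt_nonneg _)
  have hw_cont : ContinuousOn w (Icc a b) :=
    continuousOn_const.add (continuousOn_integral_of_continuousOn_Icc hab hfv)
  have hderiv : ∀ x ∈ Ioo a b,
      HasDerivAt (fun t => √(w t)) (f x * √(v x) / (2 * √(w x))) x := fun x hx =>
    ((hasDerivAt_integral_of_continuousOn_Icc hfv hx).const_add c).sqrt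
      (hw_pos x (Ioo_subset_Icc_self hx)).ne'
  have hderiv_le : ∀ x ∈ Ioo a b, f x * √(v x) / (2 * √(w x)) ≤ 1 / 2 * f x := by
    intro x hx
    have hx' := Ioo_subset_Icc_self hx
    have hsqrt_w : 0 < √(w x) := Real.sqrt_pos.2 (hw_pos x hx')
    rw [div_le_iff₀ (by positivity)]
    calc f x * √(v x) ≤ f x * √(w x) :=
          mul_le_mul_of_nonneg_left (Real.sqrt_le_sqrt (hle x hx')) (hf_nonneg x hx')
      _ = 1 / 2 * f x * (2 * √(w x)) := by ring
  have hincr : √(w b) - √(w a) ≤ ∫ s in a..b, 1 / 2 * f s :=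
    sub_le_integral_of_hasDeriv_right_of_le hab hw_cont.sqrt
      (fun x hx => (hderiv x hx).hasDerivWithinAt) (hf.const_smul (1 / 2 : ℝ)).integrableOn_Icc
      hderiv_le
  have hwa : w a = c := by simp [w]
  rw [integral_const_mul, hwa] at hincr
  calc √(v b) ≤ √(w b) := Real.sqrt_le_sqrt (hle b (right_mem_Icc.2 hab))
    _ ≤ √c + 1 / 2 * ∫ s in a..b, f s := by linarith

theorem sqrt_le_of_le_add_integral_mul_sqrt (hab : a ≤ b) (hc : 0 ≤ c)
    (hf : ContinuousOn f (Icc a b)) (hf_nonneg : ∀ t ∈ Icc a b, 0 ≤ f t)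
    (hv : ContinuousOn v (Icc a b))
    (hle : ∀ t ∈ Icc a b, v t ≤ c + ∫ s in a..t, f s * √(v s)) :
    √(v b) ≤ √c + (1 / 2) * ∫ s in a..b, f s := by
  refine le_of_forall_pos_le_add fun δ hδ => ?_
  have hδc : √(c + δ ^ 2) ≤ √c + δ := by
    rw [Real.sqrt_le_left (by positivity)]
    nlinarith [Real.sq_sqrt hc, Real.sqrt_nonneg c]
  have := sqrt_le_of_le_add_integral_mul_sqrt_of_pos hab (by positivity) hf hf_nonneg hv
    fun t ht => (hle t ht).trans (by linarith [sq_nonneg δ] : _ ≤ c + δ ^ 2 + _)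
  linarith

end SqrtGronwall

theorem stmt_2_general (t₀ t₁ : ℝ) (ζ ζ' f u : ℝ → ℝ)
    (hζ_deriv : ∀ t ∈ Set.Ico t₀ t₁, HasDerivAt ζ (ζ' t) t)
    (hζ'_cont : ContinuousOn ζ' (Set.Ico t₀ t₁))
    (hζ_nonneg : ∀ t ∈ Set.Ico t₀ t₁, 0 ≤ ζ t)
    (hf_cont : ContinuousOn f (Set.Ico t₀ t₁))
    (hf_nonneg : ∀ t ∈ Set.Ico t₀ t₁, 0 ≤ f t)
    (hu_cont : ContinuousOn u (Set.Ico t₀ t₁))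
    (hu_nonneg : ∀ t ∈ Set.Ico t₀ t₁, 0 ≤ u t)
    (hineq : ∀ t ∈ Set.Ico t₀ t₁,
      u t ≤ ζ t + ∫ s in t₀..t, f s * Real.sqrt (u s)) :
    ∀ t ∈ Set.Ico t₀ t₁,
      u t ≤ (Real.sqrt (ζ t₀ + ∫ s in t₀..t, |ζ' s|)
              + (1 / 2) * ∫ s in t₀..t, f s) ^ 2 := by
  intro T hT
  have hsub : Icc t₀ T ⊆ Ico t₀ t₁ := fun x hx => ⟨hx.1, hx.2.trans_lt hT.2⟩
  have hc : 0 ≤ ζ t₀ + ∫ s in t₀..T, |ζ' s| :=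
    add_nonneg (hζ_nonneg t₀ (hsub (left_mem_Icc.2 hT.1)))
      (integral_nonneg hT.1 fun _ _ => abs_nonneg _)
  have hζ_le : ∀ t ∈ Icc t₀ T, ζ t ≤ ζ t₀ + ∫ s in t₀..T, |ζ' s| := fun t ht =>
    le_add_integral_abs_deriv (fun x hx => hζ_deriv x (hsub hx)) (hζ'_cont.mono hsub) ht
  have hsqrt := sqrt_le_of_le_add_integral_mul_sqrt hT.1 hc (hf_cont.mono hsub)
    (fun t ht => hf_nonneg t (hsub ht)) (hu_cont.mono hsub)
    fun t ht => (hineq t (hsub ht)).trans (by linarith [hζ_le t ht])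
  calc u T = √(u T) ^ 2 := (Real.sq_sqrt (hu_nonneg T hT)).symm
    _ ≤ _ := pow_le_pow_left₀ (Real.sqrt_nonneg _) hsqrt 2

theorem stmt_2 (t₀ t₁ : ℝ) (ht : t₀ < t₁) (ζ ζ' f u : ℝ → ℝ)
    (hζ_deriv : ∀ t ∈ Set.Ico t₀ t₁, HasDerivAt ζ (ζ' t) t)
    (hζ'_cont : ContinuousOn ζ' (Set.Ico t₀ t₁))
    (hζ_nonneg : ∀ t ∈ Set.Ico t₀ t₁, 0 ≤ ζ t)
    (hf_cont : ContinuousOn f (Set.Ico t₀ t₁))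
    (hf_nonneg : ∀ t ∈ Set.Ico t₀ t₁, 0 ≤ f t)
    (hu_cont : ContinuousOn u (Set.Ico t₀ t₁))
    (hu_nonneg : ∀ t ∈ Set.Ico t₀ t₁, 0 ≤ u t)
    (hineq : ∀ t ∈ Set.Ico t₀ t₁,
      u t ≤ ζ t + ∫ s in t₀..t, f s * Real.sqrt (u s)) :
    ∀ t ∈ Set.Ico t₀ t₁,
      u t ≤ (Real.sqrt (ζ t₀ + ∫ s in t₀..t, |ζ' s|)
              + (1 / 2) * ∫ s in t₀..t, f s) ^ 2 :=
  stmt_2_general t₀ t₁ ζ ζ' f u hζ_deriv hζ'_cont hζ_nonneg hf_cont hf_nonneg hu_cont hu_nonneg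
    hineq
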